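/- arXiv:1811.07824 — 3 statements merged into one kernel-verified Lean document; each statement's English description precedes it below -/
import Mathlib

section
/- Let D be a self-adjoint operator on a Hilbert space H and a a bounded self-adjoint operator in Lip(D) (i.e., a preserves Dom D and [D,a] is bounded). Then the commutator [(1+D²)^{1/2}, a] is bounded if and only if D[F_D, a] is bounded, where F_D = D(1+D²)^{-1/2}. -/
/-!
On `range Q = Dom D` the operator `D [F_D, a]` differs from `[(1+D²)^{1/2}, a]` by the bounded
operator `Q a - a Q + [D, a] F_D`: indeed `D F_D Q = 1 - Q²` on `H` and `D a = a D + [D, a]` on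
`Dom D`. Hence one commutator is bounded on `range Q` iff the other is, and a bound for
`D [F_D, a]` on the dense subspace `Dom D` extends to all of `H` because `D` is closed.
-/

open LinearPMap

theorem LinearPMap.IsClosed.exists_mem_domain_norm_apply_le_of_dense
    {𝕜 X E F : Type*} [NontriviallyNormedField 𝕜]
    [NormedAddCommGroup X] [NormedSpace 𝕜 X] [NormedAddCommGroup E] [NormedSpace 𝕜 E]
    [NormedAddCommGroup F] [NormedSpace 𝕜 F] [CompleteSpace F]
    {T : E →ₗ.[𝕜] F} (hT : T.IsClosed) (f : X →L[𝕜] E)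
    {S : Submodule 𝕜 X} (hS : Dense (S : Set X)) (hfS : ∀ x ∈ S, f x ∈ T.domain)
    {C : ℝ} (hC : ∀ x (hx : x ∈ S), ‖T ⟨f x, hfS x hx⟩‖ ≤ C * ‖x‖) :
    ∃ hf : ∀ x, f x ∈ T.domain, ∀ x, ‖T ⟨f x, hf x⟩‖ ≤ C * ‖x‖ := by
  let g : S →L[𝕜] F := LinearMap.mkContinuous
    (T.toFun ∘ₗ ((f : X →ₗ[𝕜] E).domRestrict S).codRestrict T.domain fun x => hfS x x.2)
    C fun x => hC x x.2
  set g' := g.extend S.subtypeL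
  have hg' : ∀ x : S, g' x = T ⟨f x, hfS x x.2⟩ :=
    g.extend_eq hS.denseRange_val (isUniformInducing_val _)
  have hgraph : ∀ x, (f x, g' x) ∈ T.graph ∧ ‖g' x‖ ≤ C * ‖x‖ := by
    intro x
    refine hS.denseRange_val.induction_on x
      (p := fun x => (f x, g' x) ∈ T.graph ∧ ‖g' x‖ ≤ C * ‖x‖)
      ((hT.preimage (by fun_prop)).inter
        (isClosed_le (f := fun x => ‖g' x‖) (by fun_prop) (by fun_prop))) ?_
    intro x
    rw [hg' x]
    exact ⟨T.mem_graph ⟨f x, hfS x x.2⟩, hC x x.2⟩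
  refine ⟨fun x => mem_domain_of_mem_graph (hgraph x).1, fun x => ?_⟩
  rw [← (image_iff _).mpr (hgraph x).1]
  exact (hgraph x).2

section Commutators

variable {R E : Type*} [Ring R] [AddCommGroup E] [Module R E] [TopologicalSpace E]
  {D : E →ₗ.[R] E}

theorem mem_graph_of_commutator_eq {a K : E →L[R] E}
    (hadom : ∀ x, x ∈ D.domain → a x ∈ D.domain)
    (hK : ∀ x, ∀ hx : x ∈ D.domain, K x = D ⟨a x, hadom x hx⟩ - a (D ⟨x, hx⟩))
    {x y : E} (hxy : (x, y) ∈ D.graph) : (a x, K x + a y) ∈ D.graph := by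
  obtain ⟨⟨x, hx⟩, rfl, rfl⟩ := (mem_graph_iff D).mp hxy
  rw [← image_iff, hK x hx, sub_add_cancel]

theorem bddTransform_comp_mem_graph {Q F : E →L[R] E} (hQmem : ∀ ψ : E, Q ψ ∈ D.domain)
    (hQmem2 : ∀ ψ : E, D ⟨Q (Q ψ), hQmem (Q ψ)⟩ ∈ D.domain)
    (hQres : ∀ ψ : E, Q (Q ψ) + D ⟨D ⟨Q (Q ψ), hQmem (Q ψ)⟩, hQmem2 ψ⟩ = ψ)
    (hF : ∀ ψ : E, F ψ = D ⟨Q ψ, hQmem ψ⟩) (ψ : E) :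
    (F (Q ψ), ψ - Q (Q ψ)) ∈ D.graph := by
  rw [hF, ← image_iff (hQmem2 ψ)]
  exact (eq_sub_of_add_eq' (hQres ψ)).symm

theorem commutator_bddTransform_mem_graph [IsTopologicalAddGroup E]
    {a K Q F : E →L[R] E}
    (hadom : ∀ x, x ∈ D.domain → a x ∈ D.domain)
    (hK : ∀ x, ∀ hx : x ∈ D.domain, K x = D ⟨a x, hadom x hx⟩ - a (D ⟨x, hx⟩))
    (hQmem : ∀ ψ : E, Q ψ ∈ D.domain)
    (hQmem2 : ∀ ψ : E, D ⟨Q (Q ψ), hQmem (Q ψ)⟩ ∈ D.domain)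
    (hQres : ∀ ψ : E, Q (Q ψ) + D ⟨D ⟨Q (Q ψ), hQmem (Q ψ)⟩, hQmem2 ψ⟩ = ψ)
    (hF : ∀ ψ : E, F ψ = D ⟨Q ψ, hQmem ψ⟩) {u w : E} (huw : a (Q u) = Q w) :
    (F (a (Q u)) - a (F (Q u)), w - a u - (Q ∘L a - a ∘L Q + K ∘L F) (Q u)) ∈ D.graph := by
  have hw := bddTransform_comp_mem_graph hQmem hQmem2 hQres hF w
  have hu := mem_graph_of_commutator_eq hadom hK
    (bddTransform_comp_mem_graph hQmem hQmem2 hQres hF u)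
  rw [huw]
  convert D.graph.sub_mem hw hu using 1
  refine Prod.ext rfl ?_
  simp only [_root_.add_apply, _root_.sub_apply, ContinuousLinearMap.comp_apply,
    _root_.map_sub, huw, Prod.snd_sub]
  abel

end Commutators

theorem statement7_general
    {H : Type*} [NormedAddCommGroup H] [InnerProductSpace ℂ H] [CompleteSpace H]
    (D : H →ₗ.[ℂ] H) (hD : IsSelfAdjoint D)
    (a : H →L[ℂ] H)
    (hadom : ∀ x, x ∈ D.domain → a x ∈ D.domain)
    -- `K` is the (bounded extension of the) commutator `[D, a]`
    (K : H →L[ℂ] H)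
    (hK : ∀ x, ∀ hx : x ∈ D.domain, K x = D ⟨a x, hadom x hx⟩ - a (D ⟨x, hx⟩))
    -- `Q = (1+D²)^{-1/2}`
    (Q : H →L[ℂ] H)
    (hQmem : ∀ ψ : H, Q ψ ∈ D.domain)
    (hQran : ∀ x, x ∈ D.domain → ∃ u : H, Q u = x)
    (hQmem2 : ∀ ψ : H, D ⟨Q (Q ψ), hQmem (Q ψ)⟩ ∈ D.domain)
    (hQres : ∀ ψ : H, Q (Q ψ) + D ⟨D ⟨Q (Q ψ), hQmem (Q ψ)⟩, hQmem2 ψ⟩ = ψ)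
    -- `F = F_D = D (1+D²)^{-1/2}` is the bounded transform
    (F : H →L[ℂ] H) (hF : ∀ ψ : H, F ψ = D ⟨Q ψ, hQmem ψ⟩) :
    (∃ c : ℝ, ∀ u w : H, a (Q u) = Q w → ‖w - a u‖ ≤ c * ‖Q u‖) ↔
      (∃ hmem : ∀ ψ : H, F (a ψ) - a (F ψ) ∈ D.domain,
        ∃ c : ℝ, ∀ ψ : H, ‖D ⟨F (a ψ) - a (F ψ), hmem ψ⟩‖ ≤ c * ‖ψ‖) := by
  set G := Q ∘L a - a ∘L Q + K ∘L F
  have hgraph {u w : H} (huw : a (Q u) = Q w) :=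
    commutator_bddTransform_mem_graph hadom hK hQmem hQmem2 hQres hF huw
  have hkey {u w : H} (huw : a (Q u) = Q w) (h : F (a (Q u)) - a (F (Q u)) ∈ D.domain) :
      D ⟨F (a (Q u)) - a (F (Q u)), h⟩ = w - a u - G (Q u) :=
    ((image_iff h).mpr (hgraph huw)).symm
  constructor
  · rintro ⟨c, hc⟩
    have hdom (x : H) (hx : x ∈ D.domain) : F (a x) - a (F x) ∈ D.domain := by
      obtain ⟨u, rfl⟩ := hQran x hx
      obtain ⟨w, hw⟩ := hQran _ (hadom _ (hQmem u))
      exact mem_domain_of_mem_graph (hgraph hw.symm)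
    obtain ⟨hmem, hbound⟩ := hD.isClosed.exists_mem_domain_norm_apply_le_of_dense
      (F ∘L a - a ∘L F) hD.dense_domain hdom (C := c + ‖G‖) fun x hx => by
        obtain ⟨u, rfl⟩ := hQran x hx
        obtain ⟨w, hw⟩ := hQran _ (hadom _ (hQmem u))
        calc _ = ‖w - a u - G (Q u)‖ := congrArg norm (hkey hw.symm _)
          _ ≤ c * ‖Q u‖ + ‖G‖ * ‖Q u‖ :=
            norm_sub_le_of_le (hc u w hw.symm) (G.le_opNorm _)
          _ = (c + ‖G‖) * ‖Q u‖ := by ring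
    exact ⟨hmem, c + ‖G‖, hbound⟩
  · rintro ⟨hmem, c, hc⟩
    refine ⟨c + ‖G‖, fun u w huw => ?_⟩
    calc ‖w - a u‖ = ‖D ⟨_, hmem (Q u)⟩ + G (Q u)‖ := by rw [hkey huw, sub_add_cancel]
      _ ≤ c * ‖Q u‖ + ‖G‖ * ‖Q u‖ := norm_add_le_of_le (hc (Q u)) (G.le_opNorm _)
      _ = (c + ‖G‖) * ‖Q u‖ := by ring

/-- Let `D` be self-adjoint and `a` a bounded self-adjoint operator in
`Lip(D)` (i.e. `a` preserves `Dom D` and `K = [D,a]` is bounded).  Then `[(1+D²)^{1/2}, a]`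
is bounded iff `D [F_D, a]` is bounded, where `F_D = D(1+D²)^{-1/2}` is the bounded
transform.  Here `Q = (1+D²)^{-1/2}` (so `(1+D²)^{1/2} = Q⁻¹` and `F_D = D ∘ Q`), and
boundedness of `[(1+D²)^{1/2},a]` means `‖w - a u‖ ≤ c ‖Q u‖` whenever `a (Q u) = Q w`. -/
theorem statement7
    {H : Type*} [NormedAddCommGroup H] [InnerProductSpace ℂ H] [CompleteSpace H]
    (D : H →ₗ.[ℂ] H) (hD : IsSelfAdjoint D)
    (a : H →L[ℂ] H) (ha : IsSelfAdjoint a)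
    (hadom : ∀ x, x ∈ D.domain → a x ∈ D.domain)
    -- `K` is the (bounded extension of the) commutator `[D, a]`
    (K : H →L[ℂ] H)
    (hK : ∀ x, ∀ hx : x ∈ D.domain, K x = D ⟨a x, hadom x hx⟩ - a (D ⟨x, hx⟩))
    -- `Q = (1+D²)^{-1/2}`
    (Q : H →L[ℂ] H) (hQsa : IsSelfAdjoint Q)
    (hQpos : ∀ ψ : H, 0 ≤ (inner ℂ ψ (Q ψ) : ℂ).re)
    (hQinj : Function.Injective Q)
    (hQmem : ∀ ψ : H, Q ψ ∈ D.domain)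
    (hQran : ∀ x, x ∈ D.domain → ∃ u : H, Q u = x)
    (hQmem2 : ∀ ψ : H, D ⟨Q (Q ψ), hQmem (Q ψ)⟩ ∈ D.domain)
    (hQres : ∀ ψ : H, Q (Q ψ) + D ⟨D ⟨Q (Q ψ), hQmem (Q ψ)⟩, hQmem2 ψ⟩ = ψ)
    -- `F = F_D = D (1+D²)^{-1/2}` is the bounded transform
    (F : H →L[ℂ] H) (hF : ∀ ψ : H, F ψ = D ⟨Q ψ, hQmem ψ⟩) :
    (∃ c : ℝ, ∀ u w : H, a (Q u) = Q w → ‖w - a u‖ ≤ c * ‖Q u‖) ↔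
      (∃ hmem : ∀ ψ : H, F (a ψ) - a (F ψ) ∈ D.domain,
        ∃ c : ℝ, ∀ ψ : H, ‖D ⟨F (a ψ) - a (F ψ), hmem ψ⟩‖ ≤ c * ‖ψ‖) :=
  statement7_general D hD a hadom K hK Q hQmem hQran hQmem2 hQres F hF
end

section
/- Let H be a Hilbert space, D a self-adjoint operator on H, and T a bounded self-adjoint operator such that T·Dom D ⊆ Dom D, [D,T] is bounded and preserves Dom D. Then for every λ ≥ 0, the commutator [(1+λ+D²)^{-1}, T] equals −(1+λ+D²)^{-1}([D,T]D + D[D,T])(1+λ+D²)^{-1} on H, and its norm is O(λ^{-3/2}) as λ → ∞. -/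
/-!
Symmetry of `D` gives `⟪x, (μ + D²) x⟫ = μ ‖x‖² + ‖D x‖²` on `Dom D²`. Hence `μ + D²` is
injective for `μ > 0`, so the commutator identity follows from `[D², T] = K D + D K`; and
`R = (μ + D²)⁻¹` satisfies `‖R‖ ≤ μ⁻¹`, `‖D R‖ ≤ μ^{-1/2}` and, since `R` is symmetric, also
`‖R D‖ ≤ μ^{-1/2}`. Each of the two terms of `R (K D + D K) R` is therefore `O(μ^{-3/2})`.
-/

open scoped ComplexInnerProductSpace

theorem Real.rpow_neg_three_halves {a : ℝ} (ha : 0 ≤ a) : a ^ (-(3 : ℝ) / 2) = (a * √a)⁻¹ := by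
  rw [neg_div, Real.rpow_neg ha, show (3 : ℝ) / 2 = 1 + 1 / 2 by norm_num,
    Real.rpow_add' ha (by norm_num), Real.rpow_one, ← Real.sqrt_eq_rpow]

namespace LinearPMap

variable {H : Type*} [NormedAddCommGroup H] [InnerProductSpace ℂ H] {D : H →ₗ.[ℂ] H}

theorem IsFormalAdjoint.inner_eq_of_mem_graph (hD : D.IsFormalAdjoint D) {x y z w : H}
    (hxz : (x, z) ∈ D.graph) (hyw : (y, w) ∈ D.graph) : ⟪z, y⟫ = ⟪x, w⟫ := by
  obtain ⟨x', rfl, rfl⟩ := (mem_graph_iff D).1 hxz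
  obtain ⟨y', rfl, rfl⟩ := (mem_graph_iff D).1 hyw
  exact hD x' y'

theorem IsFormalAdjoint.inner_eq_norm_sq_of_mem_graph (hD : D.IsFormalAdjoint D) {x z w : H}
    (hxz : (x, z) ∈ D.graph) (hzw : (z, w) ∈ D.graph) : ⟪x, w⟫ = (‖z‖ : ℂ) ^ 2 := by
  rw [← hD.inner_eq_of_mem_graph hxz hzw, inner_self_eq_norm_sq_to_K,
    RCLike.ofReal_eq_complex_ofReal]

/-- `μ + D²` is injective for `μ > 0`. -/
theorem IsFormalAdjoint.eq_zero_of_mem_graph (hD : D.IsFormalAdjoint D) {μ : ℝ} (hμ : 0 < μ)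
    {x z : H} (hxz : (x, z) ∈ D.graph) (hzx : (z, -(μ • x)) ∈ D.graph) : x = 0 := by
  have h := hD.inner_eq_norm_sq_of_mem_graph hxz hzx
  rw [inner_neg_right, ← Complex.coe_smul, inner_smul_right, inner_self_eq_norm_sq_to_K,
    RCLike.ofReal_eq_complex_ofReal] at h
  have h' : -(μ * ‖x‖ ^ 2) = ‖z‖ ^ 2 := by exact_mod_cast h
  have : ‖x‖ ^ 2 = 0 := by nlinarith [sq_nonneg ‖x‖, sq_nonneg ‖z‖]
  simpa using this

end LinearPMap

section Resolvent

variable {H : Type*} [NormedAddCommGroup H] [InnerProductSpace ℂ H]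

/-- `R` is a right inverse of `μ + D²`; for self-adjoint `D` and `μ > 0` it is `(μ + D²)⁻¹`. -/
structure IsSqResolvent (D : H →ₗ.[ℂ] H) (μ : ℝ) (R : H →L[ℂ] H) : Prop where
  mem_domain : ∀ ψ, R ψ ∈ D.domain
  apply_mem_domain : ∀ ψ, D ⟨R ψ, mem_domain ψ⟩ ∈ D.domain
  smul_add_apply_apply : ∀ ψ, μ • R ψ + D ⟨D ⟨R ψ, mem_domain ψ⟩, apply_mem_domain ψ⟩ = ψ

namespace IsSqResolvent

variable {D : H →ₗ.[ℂ] H} {μ : ℝ} {R : H →L[ℂ] H} (hR : IsSqResolvent D μ R)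
include hR

theorem mem_graph (ψ : H) : (R ψ, D ⟨R ψ, hR.mem_domain ψ⟩) ∈ D.graph :=
  D.mem_graph ⟨_, _⟩

theorem apply_mem_graph (ψ : H) : (D ⟨R ψ, hR.mem_domain ψ⟩, ψ - μ • R ψ) ∈ D.graph := by
  convert D.mem_graph ⟨_, hR.apply_mem_domain ψ⟩ using 2
  exact sub_eq_of_eq_add' (hR.smul_add_apply_apply ψ).symm

variable (hD : D.IsFormalAdjoint D)
include hD

theorem inner_apply_self (ψ : H) :
    ⟪R ψ, ψ⟫ = ((μ * ‖R ψ‖ ^ 2 + ‖D ⟨R ψ, hR.mem_domain ψ⟩‖ ^ 2 : ℝ) : ℂ) := by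
  have h := hD.inner_eq_norm_sq_of_mem_graph (hR.mem_graph ψ) (hR.apply_mem_graph ψ)
  rw [inner_sub_right, ← Complex.coe_smul, inner_smul_right, inner_self_eq_norm_sq_to_K,
    RCLike.ofReal_eq_complex_ofReal, sub_eq_iff_eq_add] at h
  rw [h]
  push_cast
  ring

theorem energy_le (ψ : H) :
    μ * ‖R ψ‖ ^ 2 + ‖D ⟨R ψ, hR.mem_domain ψ⟩‖ ^ 2 ≤ ‖R ψ‖ * ‖ψ‖ := by
  calc _ = (⟪R ψ, ψ⟫).re := by rw [hR.inner_apply_self hD, Complex.ofReal_re]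
    _ ≤ ‖⟪R ψ, ψ⟫‖ := Complex.re_le_norm _
    _ ≤ ‖R ψ‖ * ‖ψ‖ := norm_inner_le_norm _ _

theorem norm_apply_le (hμ : 0 < μ) (ψ : H) : ‖R ψ‖ ≤ ‖ψ‖ / μ := by
  have h := hR.energy_le hD ψ
  rw [le_div_iff₀ hμ]
  nlinarith [norm_nonneg (R ψ), norm_nonneg ψ, sq_nonneg ‖D ⟨R ψ, hR.mem_domain ψ⟩‖]

theorem norm_apply_apply_le (hμ : 0 < μ) (ψ : H) :
    ‖D ⟨R ψ, hR.mem_domain ψ⟩‖ ≤ ‖ψ‖ / √μ := by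
  have h := hR.energy_le hD ψ
  have hr := (le_div_iff₀ hμ).1 (hR.norm_apply_le hD hμ ψ)
  have hsq : (√μ * ‖D ⟨R ψ, hR.mem_domain ψ⟩‖) ^ 2 ≤ ‖ψ‖ ^ 2 := by
    rw [mul_pow, Real.sq_sqrt hμ.le]
    nlinarith [mul_le_mul_of_nonneg_left h hμ.le, mul_le_mul_of_nonneg_right hr (norm_nonneg ψ),
      sq_nonneg (μ * ‖R ψ‖)]
  rw [le_div_iff₀' (Real.sqrt_pos.2 hμ)]
  exact (pow_le_pow_iff_left₀ (by positivity) (norm_nonneg ψ) two_ne_zero).1 hsq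

theorem isSymmetric : (R : H →ₗ[ℂ] H).IsSymmetric := by
  intro φ χ
  have h₁ := hD.inner_eq_of_mem_graph (hR.mem_graph φ) (hR.apply_mem_graph χ)
  have h₂ := hD.inner_eq_of_mem_graph (hR.mem_graph χ) (hR.apply_mem_graph φ)
  rw [← inner_conj_symm, h₂, inner_conj_symm] at h₁
  simp only [inner_sub_left, inner_sub_right, ← Complex.coe_smul, inner_smul_left,
    inner_smul_right, Complex.conj_ofReal] at h₁
  simp only [ContinuousLinearMap.coe_coe]
  linear_combination -h₁

theorem norm_apply_le_of_mem_graph (hμ : 0 < μ) {φ y : H} (hφy : (φ, y) ∈ D.graph) :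
    ‖R y‖ ≤ ‖φ‖ / √μ := by
  set u := R y
  have hsq : ‖u‖ ^ 2 ≤ ‖u‖ / √μ * ‖φ‖ :=
    calc ‖u‖ ^ 2 = ‖⟪u, u⟫‖ := (inner_self_eq_norm_sq u).symm.trans (inner_self_re_eq_norm u)
      _ = ‖⟪D ⟨R u, hR.mem_domain u⟩, φ⟫‖ := by
        rw [hD.inner_eq_of_mem_graph (hR.mem_graph u) hφy, norm_inner_symm (R u)]
        exact congrArg _ (hR.isSymmetric hD y u)
      _ ≤ ‖D ⟨R u, hR.mem_domain u⟩‖ * ‖φ‖ := norm_inner_le_norm _ _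
      _ ≤ ‖u‖ / √μ * ‖φ‖ := by gcongr; exact hR.norm_apply_apply_le hD hμ u
  rcases (norm_nonneg u).eq_or_lt with hu | hu
  · rw [← hu]; positivity
  · rw [div_mul_eq_mul_div, sq, le_div_iff₀ (Real.sqrt_pos.2 hμ), mul_assoc] at hsq
    rw [le_div_iff₀ (Real.sqrt_pos.2 hμ)]
    exact le_of_mul_le_mul_left hsq hu

-- `T` preserves `Dom D` and `[D, T] = K` there, in graph form.
variable {T K : H →L[ℂ] H} (hTK : ∀ x y, (x, y) ∈ D.graph → (T x, K x + T y) ∈ D.graph)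
  (hKdom : ∀ x, x ∈ D.domain → K x ∈ D.domain)
include hTK hKdom

/-- `[μ + D², T] = [D², T] = KD + DK` on the domain of `D²`, so `R T - T R = -R (KD + DK) R`. -/
theorem commutator_apply (hμ : 0 < μ) (ψ : H) :
    R (T ψ) - T (R ψ) =
      -R (K (D ⟨R ψ, hR.mem_domain ψ⟩) + D ⟨K (R ψ), hKdom _ (hR.mem_domain ψ)⟩) := by
  set r := R ψ
  set d := D ⟨r, hR.mem_domain ψ⟩
  set w := K d + D ⟨K r, hKdom _ (hR.mem_domain ψ)⟩
  have hTr := hTK _ _ (hR.mem_graph ψ)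
  have hTd := hTK _ _ (hR.apply_mem_graph ψ)
  have hKr := D.mem_graph ⟨K r, hKdom _ (hR.mem_domain ψ)⟩
  have hx : (R (T ψ) - T r + R w, D ⟨R (T ψ), hR.mem_domain _⟩ - (K r + T d)
      + D ⟨R w, hR.mem_domain w⟩) ∈ D.graph :=
    D.graph.add_mem (D.graph.sub_mem (hR.mem_graph _) hTr) (hR.mem_graph w)
  have hDx : (D ⟨R (T ψ), hR.mem_domain _⟩ - (K r + T d) + D ⟨R w, hR.mem_domain w⟩,
      -(μ • (R (T ψ) - T r + R w))) ∈ D.graph := by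
    convert D.graph.add_mem (D.graph.sub_mem (hR.apply_mem_graph (T ψ))
      (D.graph.add_mem hKr hTd)) (hR.apply_mem_graph w) using 1
    simp only [Prod.mk_add_mk, Prod.mk_sub_mk, map_sub, ContinuousLinearMap.map_smul_of_tower, w]
    congr 1
    module
  exact eq_neg_of_add_eq_zero_left (hD.eq_zero_of_mem_graph hμ hx hDx)

theorem norm_commutator_le (hμ : 0 < μ) : ‖R ∘L T - T ∘L R‖ ≤ 2 * ‖K‖ / (μ * √μ) := by
  refine ContinuousLinearMap.opNorm_le_bound _ (by positivity) fun ψ => ?_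
  rw [sub_apply, ContinuousLinearMap.comp_apply, ContinuousLinearMap.comp_apply,
    hR.commutator_apply hD hTK hKdom hμ, norm_neg, map_add]
  have hμ' := Real.sqrt_pos.2 hμ
  calc _ ≤ _ := norm_add_le _ _
    _ ≤ ‖K‖ * (‖ψ‖ / √μ) / μ + ‖K‖ * (‖ψ‖ / μ) / √μ := by
      gcongr
      · exact (hR.norm_apply_le hD hμ _).trans
          (by gcongr; exact K.le_opNorm_of_le (hR.norm_apply_apply_le hD hμ ψ))
      · exact (hR.norm_apply_le_of_mem_graph hD hμ (D.mem_graph ⟨_, _⟩)).trans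
          (by gcongr; exact K.le_opNorm_of_le (hR.norm_apply_le hD hμ ψ))
    _ = 2 * ‖K‖ / (μ * √μ) * ‖ψ‖ := by field_simp; ring

end IsSqResolvent

theorem IsSelfAdjoint.isFormalAdjoint [CompleteSpace H] {D : H →ₗ.[ℂ] H} (hD : IsSelfAdjoint D) :
    D.IsFormalAdjoint D := by
  have h := LinearPMap.adjoint_isFormalAdjoint hD.dense_domain
  rwa [LinearPMap.isSelfAdjoint_def.1 hD] at h

end Resolvent

theorem statement18_general
    {H : Type*} [NormedAddCommGroup H] [InnerProductSpace ℂ H] [CompleteSpace H]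
    (D : H →ₗ.[ℂ] H) (hD : IsSelfAdjoint D)
    (T : H →L[ℂ] H)
    (hTdom : ∀ x, x ∈ D.domain → T x ∈ D.domain)
    -- `K` is the (bounded extension of the) commutator `[D, T]`, preserving `Dom D`
    (K : H →L[ℂ] H)
    (hK : ∀ x, ∀ hx : x ∈ D.domain, K x = D ⟨T x, hTdom x hx⟩ - T (D ⟨x, hx⟩))
    (hKdom : ∀ x, x ∈ D.domain → K x ∈ D.domain)
    -- `R λ = (1+λ+D²)⁻¹`
    (R : ℝ → (H →L[ℂ] H))
    (hR1 : ∀ lam : ℝ, ∀ hl : 0 ≤ lam, ∀ ψ : H, R lam ψ ∈ D.domain)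
    (hR2 : ∀ lam : ℝ, ∀ hl : 0 ≤ lam, ∀ ψ : H,
      D ⟨R lam ψ, hR1 lam hl ψ⟩ ∈ D.domain)
    (hRres : ∀ lam : ℝ, ∀ hl : 0 ≤ lam, ∀ ψ : H,
      (1 + lam) • R lam ψ + D ⟨D ⟨R lam ψ, hR1 lam hl ψ⟩, hR2 lam hl ψ⟩ = ψ) :
    (∀ lam : ℝ, ∀ hl : 0 ≤ lam, ∀ ψ : H,
      R lam (T ψ) - T (R lam ψ) =
        - R lam (K (D ⟨R lam ψ, hR1 lam hl ψ⟩)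
            + D ⟨K (R lam ψ), hKdom _ (hR1 lam hl ψ)⟩)) ∧
    ∃ c : ℝ, ∀ lam : ℝ, 1 ≤ lam →
      ‖R lam ∘L T - T ∘L R lam‖ ≤ c * lam ^ (-(3 : ℝ) / 2) := by
  have hsym := hD.isFormalAdjoint
  have hRes (lam : ℝ) (hl : 0 ≤ lam) : IsSqResolvent D (1 + lam) (R lam) :=
    ⟨hR1 lam hl, hR2 lam hl, hRres lam hl⟩
  have hTK (x y : H) (hxy : (x, y) ∈ D.graph) : (T x, K x + T y) ∈ D.graph := by
    obtain ⟨x, rfl, rfl⟩ := (D.mem_graph_iff).1 hxy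
    convert D.mem_graph ⟨T x, hTdom x x.2⟩ using 2
    rw [hK x x.2, sub_add_cancel]
  refine ⟨fun lam hl => (hRes lam hl).commutator_apply hsym hTK hKdom (by linarith), 2 * ‖K‖,
    fun lam hlam => ?_⟩
  have hl : 0 < lam := by linarith
  calc _ ≤ 2 * ‖K‖ / ((1 + lam) * √(1 + lam)) :=
        (hRes lam hl.le).norm_commutator_le hsym hTK hKdom (by linarith)
    _ ≤ 2 * ‖K‖ / (lam * √lam) := by gcongr <;> linarith
    _ = 2 * ‖K‖ * lam ^ (-(3 : ℝ) / 2) := by rw [Real.rpow_neg_three_halves hl.le, div_eq_mul_inv]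

/-- Let `D` be a self-adjoint operator on a Hilbert space `H`, and `T` a
bounded self-adjoint operator preserving `Dom D`, whose commutator `K = [D,T]` is bounded
and preserves `Dom D`.  Let `R λ = (1+λ+D²)⁻¹` be the resolvents.  Then for every `λ ≥ 0`,
`[R λ, T] = - R λ ([D,T]D + D[D,T]) R λ`, and `‖[R λ, T]‖ = O(λ^{-3/2})` as `λ → ∞`. -/
theorem statement18
    {H : Type*} [NormedAddCommGroup H] [InnerProductSpace ℂ H] [CompleteSpace H]
    (D : H →ₗ.[ℂ] H) (hD : IsSelfAdjoint D)
    (T : H →L[ℂ] H) (hTsa : IsSelfAdjoint T)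
    (hTdom : ∀ x, x ∈ D.domain → T x ∈ D.domain)
    -- `K` is the (bounded extension of the) commutator `[D, T]`, preserving `Dom D`
    (K : H →L[ℂ] H)
    (hK : ∀ x, ∀ hx : x ∈ D.domain, K x = D ⟨T x, hTdom x hx⟩ - T (D ⟨x, hx⟩))
    (hKdom : ∀ x, x ∈ D.domain → K x ∈ D.domain)
    -- `R λ = (1+λ+D²)⁻¹`
    (R : ℝ → (H →L[ℂ] H))
    (hR1 : ∀ lam : ℝ, ∀ hl : 0 ≤ lam, ∀ ψ : H, R lam ψ ∈ D.domain)
    (hR2 : ∀ lam : ℝ, ∀ hl : 0 ≤ lam, ∀ ψ : H,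
      D ⟨R lam ψ, hR1 lam hl ψ⟩ ∈ D.domain)
    (hRres : ∀ lam : ℝ, ∀ hl : 0 ≤ lam, ∀ ψ : H,
      (1 + lam) • R lam ψ + D ⟨D ⟨R lam ψ, hR1 lam hl ψ⟩, hR2 lam hl ψ⟩ = ψ) :
    (∀ lam : ℝ, ∀ hl : 0 ≤ lam, ∀ ψ : H,
      R lam (T ψ) - T (R lam ψ) =
        - R lam (K (D ⟨R lam ψ, hR1 lam hl ψ⟩)
            + D ⟨K (R lam ψ), hKdom _ (hR1 lam hl ψ)⟩)) ∧
    ∃ c : ℝ, ∀ lam : ℝ, 1 ≤ lam →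
      ‖R lam ∘L T - T ∘L R lam‖ ≤ c * lam ^ (-(3 : ℝ) / 2) :=
  statement18_general D hD T hTdom K hK hKdom R hR1 hR2 hRres
end

section
/- Let D be a self-adjoint operator on a Hilbert space H and T a bounded self-adjoint operator such that D(1+λ+D²)^{-1}T − T·D(1+λ+D²)^{-1} is compact with norm O(λ^{-1}) as λ → ∞ (for all λ ≥ 0, with integrable bound λ^{-1/2}·min(C, C'λ^{-1})). Then the commutator [F_D, T] of the bounded transform F_D = D(1+D²)^{-1/2} with T is a compact operator, since [F_D,T] = (1/π)∫₀^∞ λ^{-1/2} [D(1+λ+D²)^{-1}, T] dλ converges in norm. -/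
open MeasureTheory Set

/-!
As a Bochner integral in operator norm, `π⁻¹ ∫₀^∞ λ^{-1/2} [D(1+λ+D²)⁻¹, T] dλ` exists: the
integrand is continuous in `λ`, since `λ ↦ x(1+λ+x²)⁻¹` is 1-Lipschitz in sup norm and a
⋆-homomorphism of C⋆-algebras is contractive, and it is dominated by the integrable
`λ^{-1/2} min(C, C'λ⁻¹)`. Evaluating at a vector and using the strong integral representation of
`F_D` identifies this integral with `[F_D, T]`. It is compact because the compact operators form
a closed subspace, and a Bochner integral lies in every closed subspace containing its integrand
almost everywhere (it is killed by the quotient map).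
-/

theorem Submodule.integral_mem_of_ae_mem {α 𝕜 E : Type*} [MeasurableSpace α] {μ : Measure α}
    [RCLike 𝕜] [NormedAddCommGroup E] [NormedSpace 𝕜 E] [NormedSpace ℝ E] [CompleteSpace E]
    (p : Submodule 𝕜 E) [IsClosed (p : Set E)] {g : α → E} (hg : ∀ᵐ a ∂μ, g a ∈ p) :
    ∫ a, g a ∂μ ∈ p := by
  by_cases hint : Integrable g μ
  · have : ∫ a, p.mkQL (g a) ∂μ = 0 := by
      refine integral_eq_zero_of_ae ?_
      filter_upwards [hg] with a ha
      simpa using ha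
    rwa [p.mkQL.integral_comp_comm hint, Submodule.mkQL_apply, Submodule.mkQ_apply,
      Submodule.Quotient.mk_eq_zero] at this
  · simp [integral_undef hint]

theorem isCompactOperator_integral {α 𝕜 E F : Type*} [MeasurableSpace α] {μ : Measure α}
    [RCLike 𝕜] [NormedAddCommGroup E] [NormedSpace 𝕜 E] [NormedAddCommGroup F] [NormedSpace 𝕜 F]
    [NormedSpace ℝ F] [SMulCommClass 𝕜 ℝ F] [CompleteSpace F] {g : α → E →L[𝕜] F}
    (hg : ∀ᵐ a ∂μ, IsCompactOperator (g a)) :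
    IsCompactOperator ⇑(∫ a, g a ∂μ) :=
  have : IsClosed (compactOperator (RingHom.id 𝕜) E F : Set (E →L[𝕜] F)) :=
    isClosed_setOfPred_isCompactOperator
  (compactOperator (RingHom.id 𝕜) E F).integral_mem_of_ae_mem hg

theorem abs_mul_inv_one_add_add_sq_sub_le {a b : ℝ} (ha : 0 ≤ a) (hb : 0 ≤ b) (x : ℝ) :
    |x * (1 + a + x ^ 2)⁻¹ - x * (1 + b + x ^ 2)⁻¹| ≤ |a - b| := by
  have hu : 0 < 1 + a + x ^ 2 := by positivity
  have hv : 0 < 1 + b + x ^ 2 := by positivity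
  have hx : |x| ≤ (1 + a + x ^ 2) * (1 + b + x ^ 2) := by
    nlinarith [sq_nonneg (|x| - 1), sq_abs x, abs_nonneg x]
  have key : x * (1 + a + x ^ 2)⁻¹ - x * (1 + b + x ^ 2)⁻¹ =
      x * (b - a) / ((1 + a + x ^ 2) * (1 + b + x ^ 2)) := by
    field_simp
    ring
  rw [key, abs_div, abs_mul, abs_of_pos (mul_pos hu hv), div_le_iff₀ (mul_pos hu hv),
    abs_sub_comm]
  exact mul_le_mul_of_nonneg_right hx (abs_nonneg _) |>.trans_eq (mul_comm _ _)

theorem lipschitzOnWith_of_apply_eq_mul_inv_one_add_add_sq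
    {d : ℝ → BoundedContinuousFunction ℝ ℂ}
    (hd : ∀ lam : ℝ, 0 ≤ lam → ∀ x : ℝ, d lam x = ((x * (1 + lam + x ^ 2)⁻¹ : ℝ) : ℂ)) :
    LipschitzOnWith 1 d (Ici 0) := by
  refine LipschitzOnWith.of_dist_le_mul fun a ha b hb => ?_
  rw [NNReal.coe_one, one_mul]
  refine (BoundedContinuousFunction.dist_le dist_nonneg).mpr fun x => ?_
  rw [hd a ha x, hd b hb x, Complex.isometry_ofReal.dist_eq, Real.dist_eq, Real.dist_eq]
  exact abs_mul_inv_one_add_add_sq_sub_le ha hb x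

theorem integrableOn_Ioi_inv_sqrt_mul_min {C C' : ℝ} (hC : 0 ≤ C) (hC' : 0 ≤ C') :
    IntegrableOn (fun lam : ℝ => (Real.sqrt lam)⁻¹ * min C (C' * lam⁻¹)) (Ioi 0) := by
  have hcont : ContinuousOn (fun lam : ℝ => (Real.sqrt lam)⁻¹ * min C (C' * lam⁻¹)) (Ioi 0) :=
    (Real.continuous_sqrt.continuousOn.inv₀ fun _ h => Real.sqrt_ne_zero'.mpr h).mul
      ((continuous_const.min continuous_id).comp_continuousOn
        (continuousOn_const.mul (continuousOn_inv₀.mono fun _ h => ne_of_gt h)))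
  have hrpow : ∀ lam : ℝ, 0 < lam → (Real.sqrt lam)⁻¹ = lam ^ (-(1 / 2) : ℝ) := fun lam h => by
    rw [Real.sqrt_eq_rpow, Real.rpow_neg h.le]
  have hnorm : ∀ lam : ℝ, 0 < lam → ‖(Real.sqrt lam)⁻¹ * min C (C' * lam⁻¹)‖ =
      lam ^ (-(1 / 2) : ℝ) * min C (C' * lam⁻¹) := fun lam h => by
    rw [hrpow lam h, Real.norm_of_nonneg (mul_nonneg (by positivity) (le_min hC (by positivity)))]
  have near_zero : IntegrableOn (fun lam : ℝ => (Real.sqrt lam)⁻¹ * min C (C' * lam⁻¹))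
      (Ioc 0 1) := by
    have hdom : IntegrableOn (fun lam : ℝ => lam ^ (-(1 / 2) : ℝ) * C) (Ioc 0 1) := by
      rw [← intervalIntegrable_iff_integrableOn_Ioc_of_le zero_le_one]
      exact (intervalIntegral.intervalIntegrable_rpow' (by norm_num)).mul_const C
    refine hdom.mono' ((hcont.mono Ioc_subset_Ioi_self).aestronglyMeasurable measurableSet_Ioc) ?_
    filter_upwards [ae_restrict_mem measurableSet_Ioc] with lam hlam
    rw [hnorm lam hlam.1]
    exact mul_le_mul_of_nonneg_left (min_le_left _ _) (Real.rpow_nonneg hlam.1.le _)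
  have near_infty : IntegrableOn (fun lam : ℝ => (Real.sqrt lam)⁻¹ * min C (C' * lam⁻¹))
      (Ioi 1) := by
    have hdom : IntegrableOn (fun lam : ℝ => lam ^ (-(3 / 2) : ℝ) * C') (Ioi 1) :=
      Integrable.mul_const (integrableOn_Ioi_rpow_of_lt (by norm_num) zero_lt_one) C'
    refine hdom.mono' ((hcont.mono (Ioi_subset_Ioi zero_le_one)).aestronglyMeasurable
      measurableSet_Ioi) ?_
    filter_upwards [ae_restrict_mem measurableSet_Ioi] with lam hlam
    have h0 : 0 < lam := zero_lt_one.trans hlam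
    calc ‖(Real.sqrt lam)⁻¹ * min C (C' * lam⁻¹)‖
      _ ≤ lam ^ (-(1 / 2) : ℝ) * (C' * lam ^ (-1 : ℝ)) := by
          rw [hnorm lam h0, Real.rpow_neg_one]
          exact mul_le_mul_of_nonneg_left (min_le_right _ _) (by positivity)
      _ = lam ^ (-(3 / 2) : ℝ) * C' := by
          rw [mul_left_comm, ← Real.rpow_add h0, mul_comm]
          norm_num
  simpa [Ioc_union_Ioi_eq_Ioi zero_le_one] using near_zero.union near_infty

theorem integrableOn_Ioi_inv_sqrt_smul_of_norm_le_min {E : Type*} [NormedAddCommGroup E]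
    [NormedSpace ℝ E] {G : ℝ → E} (hG : ContinuousOn G (Ioi 0)) {C C' : ℝ}
    (hbd : ∀ lam : ℝ, 0 < lam → ‖G lam‖ ≤ min C (C' * lam⁻¹)) :
    IntegrableOn (fun lam : ℝ => (Real.sqrt lam)⁻¹ • G lam) (Ioi 0) := by
  have hC : 0 ≤ C := (norm_nonneg _).trans ((hbd 1 one_pos).trans (min_le_left _ _))
  have hC' : 0 ≤ C' := by
    simpa using (norm_nonneg _).trans ((hbd 1 one_pos).trans (min_le_right _ _))
  refine (integrableOn_Ioi_inv_sqrt_mul_min hC hC').mono'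
    (((Real.continuous_sqrt.continuousOn.inv₀ fun _ h => Real.sqrt_ne_zero'.mpr h).smul hG)
      |>.aestronglyMeasurable measurableSet_Ioi) ?_
  filter_upwards [ae_restrict_mem measurableSet_Ioi] with lam hlam
  rw [norm_smul, Real.norm_of_nonneg (by positivity)]
  exact mul_le_mul_of_nonneg_left (hbd lam hlam) (by positivity)

theorem comp_sub_comp_eq_smul_integral_of_apply_eq_smul_integral {α 𝕜 E : Type*}
    [MeasurableSpace α] {μ : Measure α} [RCLike 𝕜] [NormedAddCommGroup E] [NormedSpace 𝕜 E]
    [NormedSpace ℝ E] [CompleteSpace E] (w : α → ℝ) (B : α → E →L[𝕜] E) (F T : E →L[𝕜] E) (c : ℝ)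
    (hB : ∀ ψ, Integrable (fun a => w a • B a ψ) μ)
    (hF : ∀ ψ, F ψ = c • ∫ a, w a • B a ψ ∂μ)
    (hcomm : Integrable (fun a => w a • (B a ∘L T - T ∘L B a)) μ) :
    F ∘L T - T ∘L F = c • ∫ a, w a • (B a ∘L T - T ∘L B a) ∂μ := by
  ext ψ
  rw [sub_apply, ContinuousLinearMap.comp_apply, ContinuousLinearMap.comp_apply,
    hF, hF, T.map_smul_of_tower, ← T.integral_comp_comm (hB ψ), ← smul_sub,
    ← integral_sub (hB _) (T.integrable_comp (hB ψ)), smul_apply,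
    ContinuousLinearMap.integral_apply hcomm]
  simp [smul_sub, T.map_smul_of_tower]

theorem statement19_general
    {H : Type*} [NormedAddCommGroup H] [InnerProductSpace ℂ H] [CompleteSpace H]
    -- `Ψ` is the bounded continuous functional calculus of the self-adjoint operator `D`
    (Ψ : BoundedContinuousFunction ℝ ℂ →⋆ₐ[ℂ] (H →L[ℂ] H))
    (T : H →L[ℂ] H)
    -- `d λ` is the function `x ↦ x(1+λ+x²)⁻¹`, so that `Ψ (d λ) = D(1+λ+D²)⁻¹`
    (d : ℝ → BoundedContinuousFunction ℝ ℂ)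
    (hd : ∀ lam : ℝ, 0 ≤ lam → ∀ x : ℝ, d lam x = ((x * (1 + lam + x ^ 2)⁻¹ : ℝ) : ℂ))
    -- `f` is the function `x ↦ x(1+x²)^{-1/2}`, so that `Ψ f = F_D` is the bounded transform
    (f : BoundedContinuousFunction ℝ ℂ)
    -- each commutator `[D(1+λ+D²)⁻¹, T]` is compact ...
    (hcpt : ∀ lam : ℝ, 0 ≤ lam →
      IsCompactOperator (Ψ (d lam) ∘L T - T ∘L Ψ (d lam)))
    -- ... with norm `O(λ⁻¹)`, more precisely with the integrable bound `min (C, C' λ⁻¹)`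
    (C C' : ℝ)
    (hbd : ∀ lam : ℝ, 0 ≤ lam →
      ‖Ψ (d lam) ∘L T - T ∘L Ψ (d lam)‖ ≤ min C (C' * lam⁻¹))
    -- the integral representation of the bounded transform holds strongly
    (hrep : ∀ ψ : H,
      IntegrableOn (fun lam : ℝ => (Real.sqrt lam)⁻¹ • Ψ (d lam) ψ) (Ioi 0) volume ∧
      Ψ f ψ = (Real.pi)⁻¹ • ∫ lam in Ioi (0 : ℝ), (Real.sqrt lam)⁻¹ • Ψ (d lam) ψ) :
    IsCompactOperator (Ψ f ∘L T - T ∘L Ψ f) := by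
  have hΨ : LipschitzWith 1 Ψ := AddMonoidHomClass.lipschitz_of_bound_nnnorm Ψ 1 fun a => by
    simpa using NonUnitalStarAlgHom.nnnorm_apply_le Ψ a
  have hcomm : ContinuousOn (fun lam => Ψ (d lam) ∘L T - T ∘L Ψ (d lam)) (Ioi 0) :=
    ((continuous_id.clm_comp continuous_const).sub (continuous_const.clm_comp continuous_id))
      |>.comp_continuousOn ((hΨ.comp_lipschitzOnWith
        (lipschitzOnWith_of_apply_eq_mul_inv_one_add_add_sq hd)).continuousOn.mono
          Ioi_subset_Ici_self)
  rw [comp_sub_comp_eq_smul_integral_of_apply_eq_smul_integral (fun lam => (Real.sqrt lam)⁻¹)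
    (fun lam => Ψ (d lam)) (Ψ f) T (Real.pi)⁻¹ (fun ψ => (hrep ψ).1) (fun ψ => (hrep ψ).2)
    (integrableOn_Ioi_inv_sqrt_smul_of_norm_le_min hcomm fun lam h => hbd lam h.le)]
  refine (isCompactOperator_integral ?_).smul _
  filter_upwards [ae_restrict_mem measurableSet_Ioi] with lam hlam
  exact (hcpt lam (le_of_lt hlam)).smul _

/-- Let `D` be a self-adjoint operator on a Hilbert space `H` with bounded
continuous functional calculus `Ψ`, and let `T` be a bounded self-adjoint operator such that
the commutators `[D(1+λ+D²)⁻¹, T]` are compact, with norm bounded by `min(C, C'λ⁻¹)`.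
Since `F_D ψ = (1/π) ∫₀^∞ λ^{-1/2} D(1+λ+D²)⁻¹ ψ dλ` holds strongly, the commutator
`[F_D, T]` is a norm-convergent integral of compact operators, hence compact. -/
theorem statement19
    {H : Type*} [NormedAddCommGroup H] [InnerProductSpace ℂ H] [CompleteSpace H]
    -- `Ψ` is the bounded continuous functional calculus of the self-adjoint operator `D`
    (Ψ : BoundedContinuousFunction ℝ ℂ →⋆ₐ[ℂ] (H →L[ℂ] H))
    (hΨ : Continuous Ψ)
    (T : H →L[ℂ] H) (hT : IsSelfAdjoint T)
    -- `d λ` is the function `x ↦ x(1+λ+x²)⁻¹`, so that `Ψ (d λ) = D(1+λ+D²)⁻¹`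
    (d : ℝ → BoundedContinuousFunction ℝ ℂ)
    (hd : ∀ lam : ℝ, 0 ≤ lam → ∀ x : ℝ, d lam x = ((x * (1 + lam + x ^ 2)⁻¹ : ℝ) : ℂ))
    -- `f` is the function `x ↦ x(1+x²)^{-1/2}`, so that `Ψ f = F_D` is the bounded transform
    (f : BoundedContinuousFunction ℝ ℂ)
    (hf : ∀ x : ℝ, f x = ((x * (Real.sqrt (1 + x ^ 2))⁻¹ : ℝ) : ℂ))
    -- each commutator `[D(1+λ+D²)⁻¹, T]` is compact ...
    (hcpt : ∀ lam : ℝ, 0 ≤ lam →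
      IsCompactOperator (Ψ (d lam) ∘L T - T ∘L Ψ (d lam)))
    -- ... with norm `O(λ⁻¹)`, more precisely with the integrable bound `min (C, C' λ⁻¹)`
    (C C' : ℝ)
    (hbd : ∀ lam : ℝ, 0 ≤ lam →
      ‖Ψ (d lam) ∘L T - T ∘L Ψ (d lam)‖ ≤ min C (C' * lam⁻¹))
    -- the integral representation of the bounded transform holds strongly
    (hrep : ∀ ψ : H,
      IntegrableOn (fun lam : ℝ => (Real.sqrt lam)⁻¹ • Ψ (d lam) ψ) (Ioi 0) volume ∧
      Ψ f ψ = (Real.pi)⁻¹ • ∫ lam in Ioi (0 : ℝ), (Real.sqrt lam)⁻¹ • Ψ (d lam) ψ) :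
    IsCompactOperator (Ψ f ∘L T - T ∘L Ψ f) :=
  statement19_general Ψ T d hd f hcpt C C' hbd hrep
end
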